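/- Let n be a positive integer, let λ, μ, λ', μ' be nonzero complex numbers, and let δ and δ' be the ℂ-algebra automorphisms of K = ℂ(x,y) determined by δ(x) = λx, δ(y) = μy and δ'(x) = λ'x, δ'(y) = μ'y. If δ and δ' both have order n in the automorphism group Aut_ℂ(K), then δ and δ' are conjugate in Aut_ℂ(K): there exists χ ∈ Aut_ℂ(K) with χ ∘ δ ∘ χ⁻¹ = δ'. -/

import Mathlib

/-!
A diagonal automorphism `δ_c`, `c ∈ (ℂˣ)²`, acts on a Laurent monomial `x^e` by the scalar
`c^e = ∏ cᵢ^eᵢ`. Every `A ∈ GL₂(ℤ)` gives a monomial automorphism `χ_A` of `ℂ(x,y)` sending `x^e`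
to `x^(A e)`, and comparing both sides on `x` and `y` shows that `χ_A δ_c χ_A⁻¹ = δ_{c'}` as soon
as `c = c'^A`, i.e. `c_j = ∏ᵢ c'ᵢ^(A i j)`.

So it suffices to move `c` to `c'` by `GL₂(ℤ)`. If `δ_c` has order `n`, the pair `c` has order `n`,
so `c = (ζ^a, ζ^b)` for a primitive `n`-th root of unity `ζ`. A matrix of `SL₂(ℤ)` with bottom
row `(a, b) / gcd(a, b)` moves `(1, ζ^gcd(a,b))` to `c`; since this preserves orders, `ζ^gcd(a,b)`
is again a primitive `n`-th root of unity `ζ^l`, and a matrix with bottom row `(n, l)` moves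
`(1, ζ)` to `(1, ζ^l)`. Hence all pairs of order `n` lie in the orbit of `(1, ζ)`.
-/

noncomputable section
open MvPolynomial

/-- `K = ℂ(x,y)`, the field of rational functions in two variables over `ℂ`. -/
abbrev K : Type := FractionRing (MvPolynomial (Fin 2) ℂ)

/-- The generator `x` of `K = ℂ(x,y)`. -/
def Kx : K := algebraMap (MvPolynomial (Fin 2) ℂ) K (X 0)

/-- The generator `y` of `K = ℂ(x,y)`. -/
def Ky : K := algebraMap (MvPolynomial (Fin 2) ℂ) K (X 1)

section LaurentMonomial

open Finset

variable {ι G₀ : Type*} [Fintype ι] [CommGroupWithZero G₀]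

lemma zpow_sum₀ {κ : Type*} {a : G₀} (ha : a ≠ 0) (s : Finset κ) (f : κ → ℤ) :
    a ^ (∑ i ∈ s, f i) = ∏ i ∈ s, a ^ f i := by
  classical
  induction s using Finset.induction_on with
  | empty => simp
  | insert i s hi ih => rw [sum_insert hi, prod_insert hi, zpow_add₀ ha, ih]

def laurentMonomial (x : ι → G₀) (e : ι → ℤ) : G₀ := ∏ i, x i ^ e i

/-- The multiplicative analogue of `x ᵥ* A`. -/
def zpowVecMul (x : ι → G₀) (A : Matrix ι ι ℤ) : ι → G₀ := fun j => laurentMonomial x fun i => A i j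

variable {x : ι → G₀}

lemma laurentMonomial_ne_zero (hx : ∀ i, x i ≠ 0) (e : ι → ℤ) : laurentMonomial x e ≠ 0 :=
  prod_ne_zero_iff.2 fun i _ => zpow_ne_zero _ (hx i)

lemma laurentMonomial_add (hx : ∀ i, x i ≠ 0) (e f : ι → ℤ) :
    laurentMonomial x (e + f) = laurentMonomial x e * laurentMonomial x f := by
  simp only [laurentMonomial, Pi.add_apply, zpow_add₀ (hx _), prod_mul_distrib]

lemma map_laurentMonomial {G₀' F : Type*} [CommGroupWithZero G₀'] [FunLike F G₀ G₀']
    [MonoidWithZeroHomClass F G₀ G₀'] (f : F) (e : ι → ℤ) :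
    f (laurentMonomial x e) = laurentMonomial (fun i => f (x i)) e := by
  simp only [laurentMonomial, map_prod, map_zpow₀]

lemma laurentMonomial_mulVec (hx : ∀ i, x i ≠ 0) (A : Matrix ι ι ℤ) (e : ι → ℤ) :
    laurentMonomial x (A.mulVec e) = laurentMonomial (zpowVecMul x A) e := by
  simp only [laurentMonomial, zpowVecMul, Matrix.mulVec, dotProduct, zpow_sum₀ (hx _), zpow_mul,
    ← prod_zpow]
  exact prod_comm

lemma zpowVecMul_ne_zero (hx : ∀ i, x i ≠ 0) (A : Matrix ι ι ℤ) (j : ι) : zpowVecMul x A j ≠ 0 :=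
  laurentMonomial_ne_zero hx _

lemma zpowVecMul_mul (hx : ∀ i, x i ≠ 0) (A B : Matrix ι ι ℤ) :
    zpowVecMul x (A * B) = zpowVecMul (zpowVecMul x A) B := by
  ext j
  exact laurentMonomial_mulVec hx A fun i => B i j

lemma zpowVecMul_pow (A : Matrix ι ι ℤ) (k : ℕ) : zpowVecMul x A ^ k = zpowVecMul (x ^ k) A := by
  ext j
  simp only [zpowVecMul, laurentMonomial, Pi.pow_apply, ← zpow_natCast, ← prod_zpow, ← zpow_mul,
    mul_comm]

variable [DecidableEq ι]

lemma zpowVecMul_one (x : ι → G₀) : zpowVecMul x 1 = x := by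
  ext j
  simp [zpowVecMul, laurentMonomial, Matrix.one_apply]

lemma zpowVecMul_inv_cancel (hx : ∀ i, x i ≠ 0) (A : GL ι ℤ) :
    zpowVecMul (zpowVecMul x A) ↑A⁻¹ = x := by
  rw [← zpowVecMul_mul hx, Units.mul_inv, zpowVecMul_one]

lemma orderOf_zpowVecMul (hx : ∀ i, x i ≠ 0) (A : GL ι ℤ) :
    orderOf (zpowVecMul x A) = orderOf x := by
  refine orderOf_eq_orderOf_iff.2 fun k => ⟨fun h => ?_, fun h => ?_⟩
  · have hxk : ∀ i, (x ^ k) i ≠ 0 := fun i => pow_ne_zero k (hx i)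
    rw [← zpowVecMul_inv_cancel hxk A, ← zpowVecMul_pow, h]
    ext j
    simp [zpowVecMul, laurentMonomial]
  · rw [zpowVecMul_pow, h]
    ext j
    simp [zpowVecMul, laurentMonomial]

end LaurentMonomial

abbrev MvRatFunc (σ k : Type*) [CommRing k] : Type _ := FractionRing (MvPolynomial σ k)

namespace MvRatFunc

open Finset Matrix

variable {σ k : Type*} [Field k]

def var (i : σ) : MvRatFunc σ k := algebraMap (MvPolynomial σ k) _ (X i)

lemma var_ne_zero (i : σ) : (var i : MvRatFunc σ k) ≠ 0 :=
  (map_ne_zero_iff _ (IsFractionRing.injective _ _)).2 (X_ne_zero i)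

lemma algHom_ext {L : Type*} [Ring L] [Algebra k L] {f g : MvRatFunc σ k →ₐ[k] L}
    (h : ∀ i, f (var i) = g (var i)) : f = g :=
  IsLocalization.algHom_ext (nonZeroDivisors _) (MvPolynomial.algHom_ext h)

lemma algEquiv_ext {L : Type*} [Ring L] [Algebra k L] {f g : MvRatFunc σ k ≃ₐ[k] L}
    (h : ∀ i, f (var i) = g (var i)) : f = g :=
  AlgEquiv.coe_toAlgHom_injective (algHom_ext h)

def IsDiagonal (δ : MvRatFunc σ k ≃ₐ[k] MvRatFunc σ k) (c : σ → k) : Prop :=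
  ∀ i, δ (var i) = algebraMap k _ (c i) * var i

variable {δ δ' : MvRatFunc σ k ≃ₐ[k] MvRatFunc σ k} {c c' : σ → k}

lemma IsDiagonal.pow (hδ : IsDiagonal δ c) (m : ℕ) : IsDiagonal (δ ^ m) (c ^ m) := by
  induction m with
  | zero => intro i; simp
  | succ m ih =>
    intro i
    rw [pow_succ', AlgEquiv.mul_apply, ih i, map_mul, AlgEquiv.commutes, hδ i, Pi.pow_apply,
      Pi.pow_apply, pow_succ', map_mul]
    ring

lemma IsDiagonal.orderOf_eq (hδ : IsDiagonal δ c) : orderOf δ = orderOf c := by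
  refine orderOf_eq_orderOf_iff.2 fun m => ⟨fun h => funext fun i => ?_, fun h => ?_⟩
  · have hi : algebraMap k (MvRatFunc σ k) ((c ^ m) i) * var i = 1 * var i := by
      rw [← hδ.pow m i, h, AlgEquiv.one_apply, one_mul]
    exact (map_eq_one_iff _ (algebraMap k _).injective).1 (mul_right_cancel₀ (var_ne_zero i) hi)
  · exact algEquiv_ext fun i => by
      rw [hδ.pow m i, h, Pi.one_apply, map_one, one_mul, AlgEquiv.one_apply]

variable [Fintype σ]

lemma IsDiagonal.apply_laurentMonomial (hδ : IsDiagonal δ c) (e : σ → ℤ) :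
    δ (laurentMonomial var e) = algebraMap k _ (laurentMonomial c e) * laurentMonomial var e := by
  rw [map_laurentMonomial δ, map_laurentMonomial (algebraMap k _)]
  simp only [hδ _, laurentMonomial, mul_zpow, prod_mul_distrib]

lemma algebraMap_monomial_one (d : σ →₀ ℕ) :
    algebraMap (MvPolynomial σ k) (MvRatFunc σ k) (monomial d 1) =
      laurentMonomial var fun i => (d i : ℤ) := by
  simp [monomial_eq, Finsupp.prod_fintype, laurentMonomial, var]

lemma linearIndependent_laurentMonomial :
    LinearIndependent k (laurentMonomial (var : σ → MvRatFunc σ k)) := by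
  refine linearIndependent_iff_finset_linearIndependent.2 fun s => ?_
  -- Multiplying by `x^N` moves all exponents in `s` into `ℕ^σ`, where the monomials are a basis.
  obtain ⟨N, hN⟩ := Finset.exists_le (univ.image fun p : s × σ => -p.1.1 p.2)
  have hpos (e : s) (i : σ) : 0 ≤ N + e.1 i := by
    have := hN _ (mem_image_of_mem _ (mem_univ (e, i)))
    linarith
  let shift (e : s) : σ →₀ ℕ := Finsupp.equivFunOnFinite.symm fun i => (N + e.1 i).toNat
  have hshift : Function.Injective shift := fun e e' h => by
    ext i
    have := congrArg (· i) h
    simp only [shift, Finsupp.coe_equivFunOnFinite_symm] at this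
    have := hpos e i
    have := hpos e' i
    omega
  let embed := (IsScalarTower.toAlgHom k (MvPolynomial σ k) (MvRatFunc σ k)).toLinearMap
  have key : LinearMap.mulLeft k (laurentMonomial var fun _ => N) ∘
      (laurentMonomial var ∘ Subtype.val) = embed ∘ (basisMonomials σ k ∘ shift) := by
    ext e
    simp only [embed, Function.comp_apply, LinearMap.mulLeft_apply, coe_basisMonomials,
      AlgHom.toLinearMap_apply, IsScalarTower.coe_toAlgHom', algebraMap_monomial_one,
      ← laurentMonomial_add (G₀ := MvRatFunc σ k) var_ne_zero]
    congr 1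
    funext i
    simp [shift, Int.toNat_of_nonneg (hpos e i)]
  have hmonomials := ((basisMonomials σ k).linearIndependent.comp _ hshift).map' embed
    (LinearMap.ker_eq_bot.2 (IsFractionRing.injective _ _))
  exact LinearIndependent.of_comp _ (key ▸ hmonomials)

lemma toLinearMap_aeval_eq (y : σ → MvRatFunc σ k) :
    (aeval y).toLinearMap =
      Finsupp.linearCombination k (fun d : σ →₀ ℕ => laurentMonomial y fun i => (d i : ℤ)) ∘ₗ
        (basisMonomials σ k).repr.toLinearMap :=
  (basisMonomials σ k).ext fun d => by
    simp only [LinearMap.comp_apply, LinearEquiv.coe_coe, Module.Basis.repr_self,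
      Finsupp.linearCombination_single, one_smul]
    simp [coe_basisMonomials, aeval_monomial, Finsupp.prod_fintype, laurentMonomial]

variable [DecidableEq σ]

lemma aeval_zpowVecMul_var_injective (A : GL σ ℤ) :
    Function.Injective (aeval (R := k) (zpowVecMul var A : σ → MvRatFunc σ k)) := by
  have hA : Function.Injective fun d : σ →₀ ℕ => (A : Matrix σ σ ℤ) *ᵥ fun i => (d i : ℤ) := by
    intro d d' h
    have := congrArg ((↑A⁻¹ : Matrix σ σ ℤ) *ᵥ ·) h
    simp only [Matrix.mulVec_mulVec, Units.inv_mul, Matrix.one_mulVec] at this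
    ext i
    exact_mod_cast congrFun this i
  -- `aeval` sends `X^d` to the Laurent monomial `x^(A d)`, and these are linearly independent.
  rw [← AlgHom.coe_toLinearMap, toLinearMap_aeval_eq, LinearMap.coe_comp]
  simp_rw [← laurentMonomial_mulVec (G₀ := MvRatFunc σ k) var_ne_zero]
  exact Function.Injective.comp (linearIndependent_laurentMonomial.comp _ hA)
    (basisMonomials σ k).repr.injective

def monomialAlgHom (A : GL σ ℤ) : MvRatFunc σ k →ₐ[k] MvRatFunc σ k :=
  IsFractionRing.liftAlgHom (aeval_zpowVecMul_var_injective A)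

lemma monomialAlgHom_var (A : GL σ ℤ) (j : σ) :
    monomialAlgHom A (var j : MvRatFunc σ k) = zpowVecMul var A j := by
  rw [monomialAlgHom, IsFractionRing.liftAlgHom_apply, var, IsFractionRing.lift_algebraMap]
  simp

lemma monomialAlgHom_mul (A B : GL σ ℤ) :
    (monomialAlgHom A).comp (monomialAlgHom B) = (monomialAlgHom (A * B) : MvRatFunc σ k →ₐ[k] _) :=
  algHom_ext fun j => by
    rw [AlgHom.comp_apply, monomialAlgHom_var, monomialAlgHom_var, zpowVecMul,
      map_laurentMonomial, Units.val_mul, zpowVecMul_mul var_ne_zero]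
    simp_rw [monomialAlgHom_var]
    rfl

lemma monomialAlgHom_one : (monomialAlgHom 1 : MvRatFunc σ k →ₐ[k] _) = AlgHom.id k _ :=
  algHom_ext fun j => by rw [monomialAlgHom_var, Units.val_one, zpowVecMul_one]; rfl

def monomialAut (A : GL σ ℤ) : MvRatFunc σ k ≃ₐ[k] MvRatFunc σ k :=
  AlgEquiv.ofAlgHom (monomialAlgHom A) (monomialAlgHom A⁻¹)
    (by rw [monomialAlgHom_mul, mul_inv_cancel, monomialAlgHom_one])
    (by rw [monomialAlgHom_mul, inv_mul_cancel, monomialAlgHom_one])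

lemma monomialAut_var (A : GL σ ℤ) (j : σ) :
    monomialAut A (var j : MvRatFunc σ k) = zpowVecMul var A j :=
  monomialAlgHom_var A j

lemma IsDiagonal.monomialAut_mul_eq (hδ : IsDiagonal δ c) (hδ' : IsDiagonal δ' c') (A : GL σ ℤ)
    (h : c = zpowVecMul c' A) : monomialAut A * δ = δ' * monomialAut A :=
  algEquiv_ext fun j => by
    rw [AlgEquiv.mul_apply, AlgEquiv.mul_apply, hδ j, map_mul, AlgEquiv.commutes, monomialAut_var,
      zpowVecMul, hδ'.apply_laurentMonomial, h]
    rfl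

end MvRatFunc

section SL2Orbits

open Matrix.SpecialLinearGroup
open scoped MatrixGroups

lemma exists_SL2_gcd_smul_row (v : Fin 2 → ℤ) :
    ∃ M : SL(2, ℤ), (Int.gcd (v 0) (v 1) : ℤ) • (M : Matrix (Fin 2) (Fin 2) ℤ) 1 = v := by
  rcases Nat.eq_zero_or_pos (Int.gcd (v 0) (v 1)) with hg | hg
  · obtain ⟨h0, h1⟩ := Int.gcd_eq_zero_iff.1 hg
    exact ⟨1, by ext i; fin_cases i <;> simp [h0, h1]⟩
  · have hdvd (i : Fin 2) : (Int.gcd (v 0) (v 1) : ℤ) ∣ v i := by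
      fin_cases i
      exacts [Int.gcd_dvd_left .., Int.gcd_dvd_right ..]
    obtain ⟨M, -, hM⟩ := ModularGroup.bottom_row_surj (R := ℤ)
      (a := fun i => v i / Int.gcd (v 0) (v 1))
      (Int.isCoprime_iff_gcd_eq_one.2 (Int.gcd_div_gcd_div_gcd hg))
    refine ⟨M, ?_⟩
    beta_reduce at hM
    rw [hM]
    funext i
    exact Int.mul_ediv_cancel' (hdvd i)

variable {G₀ : Type*} [CommGroupWithZero G₀]

lemma one_pair_ne_zero {x : G₀} (hx : x ≠ 0) : ∀ i, ![1, x] i ≠ 0 :=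
  Fin.forall_fin_two.2 ⟨one_ne_zero, hx⟩

lemma zpowVecMul_one_pair (x : G₀) (M : Matrix (Fin 2) (Fin 2) ℤ) :
    zpowVecMul ![1, x] M = fun j => x ^ M 1 j := by
  funext j
  simp [zpowVecMul, laurentMonomial, Fin.prod_univ_two]

lemma orderOf_one_pair (x : G₀) : orderOf ![1, x] = orderOf x := by
  simp [Pi.orderOf, Fin.univ_succ]

lemma exists_SL2_zpow_eq_zpowVecMul (ζ : G₀) (v : Fin 2 → ℤ) :
    ∃ M : SL(2, ℤ), (fun j => ζ ^ v j) = zpowVecMul ![1, ζ ^ Int.gcd (v 0) (v 1)] M := by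
  obtain ⟨M, hM⟩ := exists_SL2_gcd_smul_row v
  refine ⟨M, ?_⟩
  rw [zpowVecMul_one_pair]
  conv_lhs => rw [← hM]
  funext j
  simp [_root_.zpow_mul]

variable {F : Type*} [Field F] {n : ℕ} [NeZero n]

lemma IsPrimitiveRoot.exists_SL2_one_pair_eq {ω ω' : F} (hω : IsPrimitiveRoot ω n)
    (hω' : IsPrimitiveRoot ω' n) : ∃ M : SL(2, ℤ), ![1, ω] = zpowVecMul ![1, ω'] M := by
  obtain ⟨l, -, rfl⟩ := hω'.eq_pow_of_pow_eq_one hω.pow_eq_one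
  have hl : IsCoprime (n : ℤ) l :=
    Nat.isCoprime_iff_coprime.2 ((hω'.pow_iff_coprime (NeZero.pos n) l).1 hω).symm
  obtain ⟨M, -, hM⟩ := ModularGroup.bottom_row_surj (R := ℤ) (a := ![(n : ℤ), l]) hl
  refine ⟨M, ?_⟩
  beta_reduce at hM
  rw [zpowVecMul_one_pair, hM]
  funext j
  fin_cases j <;> simp [hω'.pow_eq_one]

lemma IsPrimitiveRoot.exists_eq_zpowVecMul_one_pair {ζ : F} (hζ : IsPrimitiveRoot ζ n)
    {c : Fin 2 → F} (hc : orderOf c = n) : ∃ M : SL(2, ℤ), c = zpowVecMul ![1, ζ] M := by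
  have hζ0 : ζ ≠ 0 := hζ.ne_zero (NeZero.ne n)
  have hcn (i : Fin 2) : c i ^ n = 1 := by
    rw [← hc]
    exact congrFun (pow_orderOf_eq_one c) i
  choose v _ hv using fun i => hζ.eq_pow_of_pow_eq_one (hcn i)
  obtain ⟨M₁, hM₁⟩ := exists_SL2_zpow_eq_zpowVecMul ζ fun i => v i
  set ω := ζ ^ Int.gcd (v 0) (v 1)
  have hcω : c = zpowVecMul ![1, ω] M₁ := by
    rw [← hM₁]
    funext i
    simp [hv]
  have hω0 : ω ≠ 0 := pow_ne_zero _ hζ0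
  have hω : IsPrimitiveRoot ω n := by
    have := orderOf_zpowVecMul (one_pair_ne_zero hω0) (toGL M₁)
    rw [coe_GL_coe_matrix, ← hcω, hc, orderOf_one_pair] at this
    exact this ▸ IsPrimitiveRoot.orderOf ω
  obtain ⟨M₂, hM₂⟩ := hω.exists_SL2_one_pair_eq hζ
  refine ⟨M₂ * M₁, ?_⟩
  rw [hcω, hM₂, Matrix.SpecialLinearGroup.coe_mul, zpowVecMul_mul (one_pair_ne_zero hζ0)]

theorem IsPrimitiveRoot.exists_eq_zpowVecMul_of_orderOf_eq {ζ : F} (hζ : IsPrimitiveRoot ζ n)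
    {c c' : Fin 2 → F} (hc : orderOf c = n) (hc' : orderOf c' = n) :
    ∃ A : GL (Fin 2) ℤ, c = zpowVecMul c' A := by
  have hp := one_pair_ne_zero (hζ.ne_zero (NeZero.ne n))
  obtain ⟨M, rfl⟩ := hζ.exists_eq_zpowVecMul_one_pair hc
  obtain ⟨M', rfl⟩ := hζ.exists_eq_zpowVecMul_one_pair hc'
  refine ⟨toGL (M'⁻¹ * M), ?_⟩
  rw [coe_GL_coe_matrix, Matrix.SpecialLinearGroup.coe_mul,
    zpowVecMul_mul (zpowVecMul_ne_zero hp _), ← zpowVecMul_mul hp,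
    ← Matrix.SpecialLinearGroup.coe_mul, mul_inv_cancel, Matrix.SpecialLinearGroup.coe_one,
    zpowVecMul_one]

end SL2Orbits

theorem diagonal_automorphisms_of_same_order_conjugate (n : ℕ) (hn : 0 < n)
    (lam mu lam' mu' : ℂ)
    (δ δ' : K ≃ₐ[ℂ] K)
    (hδx : δ Kx = algebraMap ℂ K lam * Kx) (hδy : δ Ky = algebraMap ℂ K mu * Ky)
    (hδ'x : δ' Kx = algebraMap ℂ K lam' * Kx) (hδ'y : δ' Ky = algebraMap ℂ K mu' * Ky)
    (hord : orderOf δ = n) (hord' : orderOf δ' = n) :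
    ∃ χ : K ≃ₐ[ℂ] K, χ * δ * χ⁻¹ = δ' := by
  have : NeZero n := ⟨hn.ne'⟩
  have hδ : MvRatFunc.IsDiagonal δ ![lam, mu] := Fin.forall_fin_two.2 ⟨hδx, hδy⟩
  have hδ' : MvRatFunc.IsDiagonal δ' ![lam', mu'] := Fin.forall_fin_two.2 ⟨hδ'x, hδ'y⟩
  obtain ⟨A, hA⟩ := (Complex.isPrimitiveRoot_exp n hn.ne').exists_eq_zpowVecMul_of_orderOf_eq
    (hδ.orderOf_eq ▸ hord) (hδ'.orderOf_eq ▸ hord')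
  exact ⟨MvRatFunc.monomialAut A, by rw [hδ.monomialAut_mul_eq hδ' A hA, mul_inv_cancel_right]⟩

end
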